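/- Let p > 3 be a prime, let v be the smallest positive integer that is a quadratic non-residue modulo p, and let G = Φ₄₁(1⁶) be the group of order p⁶ with presentation on generators α₁, α₂, β, β₁, β₂, γ and relations [α₁,α₂] = β, [β,α₁] = β₁, [β,α₂] = β₂, [α₁,β₁] = γ, [α₂,β₂] = γ^(−v), α₁ᵖ = α₂ᵖ = βᵖ = β₁ᵖ = β₂ᵖ = γᵖ = 1, with every commutator of a pair of generators not listed among these relations declared trivial. Then the Bogomolov multiplier B₀(G) is trivial. -/

import Mathlib

/-!
Φ₄₁(1⁶): v is the smallest positive quadratic non-residue mod p; relations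
[α₁,α₂]=β, [β,α₁]=β₁, [β,α₂]=β₂, [α₁,β₁]=γ, [α₂,β₂]=γ^(−v), all pth powers trivial.
-/

namespace Stmt14

/-- The additive group `ℚ/ℤ`. -/
abbrev QZ : Type := ℚ ⧸ AddSubgroup.zmultiples (1 : ℚ)

/-- An inhomogeneous 2-cocycle on `G` with values in `ℚ/ℤ` (trivial `G`-action). -/
def IsTwoCocycle {G : Type} [Group G] (f : G → G → QZ) : Prop :=
  ∀ g h j : G, f h j - f (g * h) j + f g (h * j) - f g h = 0

/-- An inhomogeneous 2-coboundary on `G` with values in `ℚ/ℤ` (trivial `G`-action). -/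
def IsTwoCoboundary {G : Type} [Group G] (f : G → G → QZ) : Prop :=
  ∃ c : G → QZ, ∀ g h : G, f g h = c h - c (g * h) + c g

/-- A subgroup is bicyclic if it is abelian and generated by at most two elements
(equivalently, cyclic or a direct product of two cyclic groups). -/
def IsBicyclic {G : Type} [Group G] (A : Subgroup G) : Prop :=
  (∀ x y : A, x * y = y * x) ∧ ∃ a b : G, A = Subgroup.closure {a, b}

/-- The Bogomolov multiplier `B₀(G) ⊆ H²(G, ℚ/ℤ)` is trivial, phrased at the level of
2-cocycles: every 2-cocycle whose restriction to each bicyclic subgroup is a coboundary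
(i.e. whose class restricts to zero on each bicyclic subgroup) is itself a coboundary
(i.e. its class is zero). -/
def BogomolovMultiplierIsTrivial (G : Type) [Group G] : Prop :=
  ∀ f : G → G → QZ, IsTwoCocycle f →
    (∀ A : Subgroup G, IsBicyclic A → IsTwoCoboundary (fun a b : ↥A => f ↑a ↑b)) →
    IsTwoCoboundary f

/-- The Bogomolov multiplier `B₀(G) ⊆ H²(G, ℚ/ℤ)` is nontrivial, phrased at the level of
2-cocycles. -/
def BogomolovMultiplierIsNontrivial (G : Type) [Group G] : Prop :=
  ∃ f : G → G → QZ, IsTwoCocycle f ∧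
    (∀ A : Subgroup G, IsBicyclic A → IsTwoCoboundary (fun a b : ↥A => f ↑a ↑b)) ∧
    ¬ IsTwoCoboundary f

/-- The generators. -/
inductive Gen | a1 | a2 | b | b1 | b2 | g

open FreeGroup

/-- The commutator `[x,y] = x⁻¹y⁻¹xy`. -/
def c (x y : FreeGroup Gen) : FreeGroup Gen := x⁻¹ * y⁻¹ * x * y

/-- The defining relators. -/
def rels (p : ℕ) (v : ℕ) : Set (FreeGroup Gen) :=
  { c (of .a1) (of .a2) * (of Gen.b)⁻¹,
    c (of .b) (of .a1) * (of Gen.b1)⁻¹,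
    c (of .b) (of .a2) * (of Gen.b2)⁻¹,
    c (of .a1) (of .b1) * (of Gen.g)⁻¹,
    c (of .a2) (of .b2) * ((of Gen.g) ^ (-(v : ℤ)))⁻¹,
    c (of .a1) (of .b2),
    c (of .a1) (of .g),
    c (of .a2) (of .b1),
    c (of .a2) (of .g),
    c (of .b) (of .b1),
    c (of .b) (of .b2),
    c (of .b) (of .g),
    c (of .b1) (of .b2),
    c (of .b1) (of .g),
    c (of .b2) (of .g),
    (of Gen.a1) ^ p,
    (of Gen.a2) ^ p,
    (of Gen.b) ^ p,
    (of Gen.b1) ^ p,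
    (of Gen.b2) ^ p,
    (of Gen.g) ^ p }

/-!
A cocycle whose restrictions to bicyclic subgroups are coboundaries is symmetric on commuting
pairs, so in the central extension `ℚ/ℤ → E → G` it defines, commuting pairs of `G` lift to
commuting pairs of `E`. It is a coboundary as soon as this extension splits. To split it, lift
`α₁, α₂` to elements of order `p` of `E` (possible since `ℚ/ℤ` is divisible) and send `β, β₁, β₂, γ`
to the prescribed commutators of these lifts. Commutation relations lift, and so does
`[α₂, β₂] = γ^(-v)`, which is equivalent to `α₁α₂` commuting with `β₁^v β₂`. The `p`-th power
relations follow from `[x^n, u] = [x, u]^n` and `[x, u^n] = [x, u]^n` (when `[x, u]` commutes with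
`x`, resp. `u`), and for `β` from the Hall–Petrescu formula in class three, where `p > 3` makes `p`
divide `C(p, 2)` and `C(p, 3)`.
-/

section Commutators

variable {H : Type*} [Group H]

def cmt (x y : H) : H := x⁻¹ * y⁻¹ * x * y

lemma c_eq_cmt (x y : FreeGroup Gen) : c x y = cmt x y := rfl

lemma cmt_eq_one_iff {x y : H} : cmt x y = 1 ↔ Commute x y := by
  rw [cmt, mul_assoc, ← mul_inv_rev, inv_mul_eq_one]
  exact ⟨fun h => h.symm, fun h => h.symm⟩

lemma map_cmt {H' : Type*} [Group H'] (φ : H →* H') (x y : H) :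
    φ (cmt x y) = cmt (φ x) (φ y) := by
  simp only [cmt, _root_.map_mul, _root_.map_inv]

lemma cmt_inv (x y : H) : (cmt x y)⁻¹ = cmt y x := by
  simp only [cmt]; group

lemma cmt_mul_right (x u w : H) : cmt x (u * w) = cmt x w * (w⁻¹ * cmt x u * w) := by
  simp only [cmt]; group

lemma cmt_mul_left (x y u : H) : cmt (x * y) u = y⁻¹ * cmt x u * y * cmt y u := by
  simp only [cmt]; group

lemma inv_mul_mul_eq_mul_cmt (x t : H) : x⁻¹ * t * x = t * cmt t x := by
  simp only [cmt]; group

lemma inv_mul_mul_eq_of_commute {x t : H} (h : Commute t x) : x⁻¹ * t * x = t := by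
  rw [mul_assoc, h.eq, inv_mul_cancel_left]

lemma cmt_pow_right {x u : H} (h : Commute (cmt x u) u) (n : ℕ) :
    cmt x (u ^ n) = cmt x u ^ n := by
  induction n with
  | zero => simp [cmt]
  | succ n ih =>
    rw [pow_succ, cmt_mul_right, ih, inv_mul_mul_eq_of_commute (h.pow_left n), pow_succ']

lemma cmt_pow_left {x u : H} (h : Commute x (cmt x u)) (n : ℕ) :
    cmt (x ^ n) u = cmt x u ^ n := by
  induction n with
  | zero => simp [cmt]
  | succ n ih =>
    rw [pow_succ, cmt_mul_left, ih, inv_mul_mul_eq_of_commute (h.symm.pow_left n), pow_succ]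

lemma cmt_mul_mul {x y u w : H} (hxw : Commute x w) (hyu : Commute y u)
    (hy : Commute (cmt x u) y) (hw : Commute (cmt x u) w) :
    cmt (x * y) (u * w) = cmt x u * cmt y w := by
  have hx : cmt x (u * w) = cmt x u := by
    rw [cmt_mul_right, cmt_eq_one_iff.2 hxw, one_mul, inv_mul_mul_eq_of_commute hw]
  have hy' : cmt y (u * w) = cmt y w := by
    rw [cmt_mul_right, cmt_eq_one_iff.2 hyu, mul_one, inv_mul_cancel, mul_one]
  rw [cmt_mul_left, hx, hy', inv_mul_mul_eq_of_commute hy]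

/-- The Hall–Petrescu collection formula in nilpotency class three. -/
lemma cmt_pow_left_eq_mul_choose {x u : H} (hb : Commute (cmt x u) (cmt (cmt x u) x))
    (hcx : Commute (cmt x (cmt (cmt x u) x)) x)
    (hcb : Commute (cmt x (cmt (cmt x u) x)) (cmt x u))
    (hcb₁ : Commute (cmt x (cmt (cmt x u) x)) (cmt (cmt x u) x)) (n : ℕ) :
    cmt (x ^ n) u = cmt x u ^ n * cmt (cmt x u) x ^ n.choose 2 *
      (cmt x (cmt (cmt x u) x) ^ n.choose 3)⁻¹ := by
  set b := cmt x u
  set b₁ := cmt b x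
  set c := cmt x b₁
  have conj_b : MulAut.conj x⁻¹ b = b * b₁ := by
    rw [MulAut.conj_apply, inv_inv, inv_mul_mul_eq_mul_cmt]
  have conj_b₁ : MulAut.conj x⁻¹ b₁ = b₁ * c⁻¹ := by
    rw [MulAut.conj_apply, inv_inv, inv_mul_mul_eq_mul_cmt, ← cmt_inv]
  have conj_c : MulAut.conj x⁻¹ c = c := by
    rw [MulAut.conj_apply, inv_inv, inv_mul_mul_eq_of_commute hcx]
  induction n with
  | zero => simp [cmt]
  | succ n ih =>
    set C₂ := n.choose 2
    set C₃ := n.choose 3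
    have choose_two : (n + 1).choose 2 = n + C₂ := by
      rw [Nat.choose_succ_succ', Nat.choose_one_right]
    have choose_three : (n + 1).choose 3 = C₂ + C₃ := Nat.choose_succ_succ' n 2
    have hY : Commute (b₁ ^ n * (b₁ ^ C₂ * (c ^ C₂)⁻¹) * (c ^ C₃)⁻¹) b :=
      (((hb.pow_right n).symm.mul_left ((hb.pow_right C₂).symm.mul_left
        (hcb.pow_left C₂).inv_left)).mul_left (hcb.pow_left C₃).inv_left)
    calc cmt (x ^ (n + 1)) u
        = MulAut.conj x⁻¹ (b ^ n * b₁ ^ C₂ * (c ^ C₃)⁻¹) * b := by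
          rw [pow_succ, cmt_mul_left, ih, MulAut.conj_apply, inv_inv]
      _ = b ^ n * (b₁ ^ n * (b₁ ^ C₂ * (c ^ C₂)⁻¹) * (c ^ C₃)⁻¹ * b) := by
          rw [_root_.map_mul, _root_.map_mul, _root_.map_inv (MulAut.conj x⁻¹), _root_.map_pow,
            _root_.map_pow, _root_.map_pow, conj_b, conj_b₁, conj_c,
            hb.mul_pow, (hcb₁.symm.inv_right).mul_pow, inv_pow]
          simp only [mul_assoc]
      _ = b ^ (n + 1) * b₁ ^ (n + 1).choose 2 * (c ^ (n + 1).choose 3)⁻¹ := by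
          rw [hY.eq, choose_two, choose_three, pow_succ, pow_add, add_comm C₂, pow_add,
            mul_inv_rev]
          simp only [mul_assoc]

lemma cmt_pow_eq_one_of_commute_pow {b a : H} {n : ℕ} (hb : Commute b (cmt b a))
    (hn : Commute (b ^ n) a) : cmt b a ^ n = 1 := by
  rw [← cmt_pow_left hb, cmt_eq_one_iff]
  exact hn

lemma cmt_pow_eq_one_of_pow_eq_one {a b : H} {n : ℕ} (hab : Commute (cmt a b) b)
    (hn : b ^ n = 1) : cmt a b ^ n = 1 := by
  rw [← cmt_pow_right hab, hn, cmt_eq_one_iff]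
  exact Commute.one_right a

lemma cmt_pow_prime_eq_one {x u : H} {p : ℕ} (hp : p.Prime) (h3 : 3 < p)
    (hb : Commute (cmt x u) (cmt (cmt x u) x))
    (hcx : Commute (cmt x (cmt (cmt x u) x)) x)
    (hcb : Commute (cmt x (cmt (cmt x u) x)) (cmt x u))
    (hcb₁ : Commute (cmt x (cmt (cmt x u) x)) (cmt (cmt x u) x))
    (hx : x ^ p = 1) (hb₁ : cmt (cmt x u) x ^ p = 1) (hc : cmt x (cmt (cmt x u) x) ^ p = 1) :
    cmt x u ^ p = 1 := by
  obtain ⟨m₂, hm₂⟩ : p ∣ p.choose 2 := hp.dvd_choose_self two_ne_zero (by omega)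
  obtain ⟨m₃, hm₃⟩ : p ∣ p.choose 3 := hp.dvd_choose_self three_ne_zero h3
  have h := cmt_pow_left_eq_mul_choose hb hcx hcb hcb₁ p
  rwa [hx, hm₂, hm₃, pow_mul, pow_mul, hb₁, hc, one_pow, one_pow, inv_one, mul_one, mul_one,
    cmt_eq_one_iff.2 (Commute.one_left u), eq_comm] at h

lemma commute_mul_mul_iff {a₁ a₂ b₁ b₂ : H} (h₁₂ : Commute a₁ b₂) (h₂₁ : Commute a₂ b₁)
    (hb₁ : Commute (cmt a₁ b₁) b₁) (ha₂ : Commute (cmt a₁ b₁) a₂)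
    (hb₂ : Commute (cmt a₁ b₁) b₂) (n : ℕ) :
    Commute (a₁ * a₂) (b₁ ^ n * b₂) ↔ cmt a₂ b₂ = cmt a₁ b₁ ^ (-(n : ℤ)) := by
  have hpow := cmt_pow_right hb₁ n
  rw [← cmt_eq_one_iff, cmt_mul_mul h₁₂ (h₂₁.pow_right n) (hpow ▸ ha₂.pow_left n)
    (hpow ▸ hb₂.pow_left n), hpow, zpow_neg, zpow_natCast, mul_eq_one_iff_inv_eq, eq_comm]

end Commutators

section LiftsCommutingPairs

variable {E G : Type*} [Group E] [Group G]

def LiftsCommutingPairs (π : E →* G) : Prop :=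
  ∀ x y : E, Commute (π x) (π y) → Commute x y

lemma LiftsCommutingPairs.commute_of_map_eq_one {π : E →* G} (hπ : LiftsCommutingPairs π)
    {x : E} (hx : π x = 1) (y : E) : Commute x y :=
  hπ x y (hx ▸ Commute.one_left _)

end LiftsCommutingPairs

lemma QZ.exists_nsmul_eq {n : ℕ} (hn : n ≠ 0) (z : QZ) : ∃ w : QZ, n • w = z :=
  letI := AddGroup.divisibleByNatOfDivisibleByInt ℚ
  DivisibleBy.surjective_smul QZ ℕ hn z

section Bicyclic

variable {G : Type} [Group G]

lemma isBicyclic_closure_pair {g h : G} (hgh : Commute g h) :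
    IsBicyclic (Subgroup.closure {g, h}) := by
  have := Subgroup.isMulCommutative_closure (k := {g, h}) <| by
    rintro x (rfl | rfl) y (rfl | rfl)
    exacts [rfl, hgh.eq, hgh.symm.eq, rfl]
  exact ⟨fun x y => Std.Commutative.comm x y, g, h, rfl⟩

lemma eq_swap_of_forall_isBicyclic {f : G → G → QZ}
    (hf : ∀ A : Subgroup G, IsBicyclic A → IsTwoCoboundary (fun a b : ↥A => f ↑a ↑b))
    {g h : G} (hgh : Commute g h) : f g h = f h g := by
  obtain ⟨d, hd⟩ := hf _ (isBicyclic_closure_pair hgh)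
  have hg : g ∈ Subgroup.closure {g, h} := Subgroup.subset_closure (by simp)
  have hh : h ∈ Subgroup.closure {g, h} := Subgroup.subset_closure (by simp)
  have hgh' : (⟨g, hg⟩ * ⟨h, hh⟩ : Subgroup.closure {g, h}) = ⟨h, hh⟩ * ⟨g, hg⟩ :=
    Subtype.ext hgh.eq
  have hgh₁ := hd ⟨g, hg⟩ ⟨h, hh⟩
  have hgh₂ := hd ⟨h, hh⟩ ⟨g, hg⟩
  dsimp only at hgh₁ hgh₂
  rw [hgh₁, hgh₂, hgh']
  abel

end Bicyclic

section Extension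

variable {G : Type} [Group G] {f : G → G → QZ}

lemma IsTwoCocycle.map_one_left (hf : IsTwoCocycle f) (g : G) : f 1 g = f 1 1 := by
  have h := hf 1 1 g
  rwa [one_mul, one_mul, sub_self, zero_add, sub_eq_zero] at h

lemma IsTwoCocycle.map_one_right (hf : IsTwoCocycle f) (g : G) : f g 1 = f 1 1 := by
  have h := hf g 1 1
  rw [mul_one, one_mul, sub_add_cancel, sub_eq_zero] at h
  exact h.symm

lemma IsTwoCocycle.map_inv_left_self (hf : IsTwoCocycle f) (g : G) : f g⁻¹ g = f g g⁻¹ := by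
  have h := hf g g⁻¹ g
  rwa [mul_inv_cancel, inv_mul_cancel, hf.map_one_left g, hf.map_one_right g, sub_add_cancel,
    sub_eq_zero] at h

@[ext]
structure CentralExt (f : G → G → QZ) where
  fst : QZ
  snd : G

namespace CentralExt

/-- Shifted by `f 1 1` because `f` is not assumed normalized: the identity is `⟨-f 1 1, 1⟩`. -/
def central (z : QZ) : CentralExt f := ⟨z - f 1 1, 1⟩

lemma eq_central_of_snd_eq_one {x : CentralExt f} (hx : x.snd = 1) :
    x = central (x.fst + f 1 1) :=
  CentralExt.ext (add_sub_cancel_right _ _).symm hx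

variable [hf : Fact (IsTwoCocycle f)]

instance : Group (CentralExt f) where
  mul x y := ⟨x.fst + y.fst + f x.snd y.snd, x.snd * y.snd⟩
  one := ⟨-f 1 1, 1⟩
  inv x := ⟨-x.fst - f x.snd x.snd⁻¹ - f 1 1, x.snd⁻¹⟩
  mul_assoc x y z := by
    refine CentralExt.ext ?_ (mul_assoc _ _ _)
    have h := hf.out x.snd y.snd z.snd
    show x.fst + y.fst + f x.snd y.snd + z.fst + f (x.snd * y.snd) z.snd =
      x.fst + (y.fst + z.fst + f y.snd z.snd) + f x.snd (y.snd * z.snd)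
    exact sub_eq_zero.1 (by rw [← neg_eq_zero, ← h]; abel)
  one_mul x := by
    refine CentralExt.ext ?_ (one_mul _)
    show -f 1 1 + x.fst + f 1 x.snd = x.fst
    rw [hf.out.map_one_left x.snd]; abel
  mul_one x := by
    refine CentralExt.ext ?_ (mul_one _)
    show x.fst + -f 1 1 + f x.snd 1 = x.fst
    rw [hf.out.map_one_right x.snd]; abel
  inv_mul_cancel x := by
    refine CentralExt.ext ?_ (inv_mul_cancel _)
    show -x.fst - f x.snd x.snd⁻¹ - f 1 1 + x.fst + f x.snd⁻¹ x.snd = -f 1 1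
    rw [hf.out.map_inv_left_self]; abel

lemma mul_fst (x y : CentralExt f) : (x * y).fst = x.fst + y.fst + f x.snd y.snd := rfl

def sndHom : CentralExt f →* G where
  toFun := snd
  map_one' := rfl
  map_mul' _ _ := rfl

lemma liftsCommutingPairs_sndHom (hsymm : ∀ g h : G, Commute g h → f g h = f h g) :
    LiftsCommutingPairs (sndHom : CentralExt f →* G) := by
  intro x y hxy
  refine CentralExt.ext ?_ hxy
  simp only [mul_fst]
  rw [hsymm x.snd y.snd hxy]; abel

lemma central_mul (z w : QZ) : (central z : CentralExt f) * central w = central (z + w) := by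
  refine CentralExt.ext ?_ (one_mul _)
  show z - f 1 1 + (w - f 1 1) + f 1 1 = z + w - f 1 1
  abel

lemma central_pow (z : QZ) (n : ℕ) : (central z : CentralExt f) ^ n = central (n • z) := by
  induction n with
  | zero => exact CentralExt.ext (by simp [central]; rfl) rfl
  | succ n ih => rw [pow_succ, ih, central_mul, succ_nsmul]

lemma central_zero : (central 0 : CentralExt f) = 1 :=
  CentralExt.ext (zero_sub _) rfl

lemma commute_central (z : QZ) (x : CentralExt f) : Commute (central z) x := by
  refine CentralExt.ext ?_ ((one_mul _).trans (mul_one _).symm)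
  show z - f 1 1 + x.fst + f 1 x.snd = x.fst + (z - f 1 1) + f x.snd 1
  rw [hf.out.map_one_left x.snd, hf.out.map_one_right x.snd]; abel

lemma exists_sndHom_eq_pow_eq_one {g : G} {n : ℕ} (hn : n ≠ 0) (hg : g ^ n = 1) :
    ∃ x : CentralExt f, sndHom x = g ∧ x ^ n = 1 := by
  set y : CentralExt f := ⟨0, g⟩
  have hy : y ^ n = central ((y ^ n).fst + f 1 1) :=
    eq_central_of_snd_eq_one ((map_pow sndHom y n).trans hg)
  obtain ⟨w, hw⟩ := QZ.exists_nsmul_eq hn (-((y ^ n).fst + f 1 1))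
  refine ⟨central w * y, one_mul g, ?_⟩
  rw [(commute_central w y).mul_pow, central_pow, hy, central_mul, hw, neg_add_cancel,
    central_zero]

theorem isTwoCoboundary_of_splitting (φ : G →* CentralExt f)
    (hφ : sndHom.comp φ = MonoidHom.id G) : IsTwoCoboundary f := by
  have hsnd (g : G) : (φ g).snd = g := DFunLike.congr_fun hφ g
  refine ⟨fun g => -(φ g).fst, fun g h => ?_⟩
  have hmul : (φ (g * h)).fst = (φ g).fst + (φ h).fst + f g h := by
    rw [_root_.map_mul, mul_fst, hsnd, hsnd]
  show f g h = -(φ h).fst - -(φ (g * h)).fst + -(φ g).fst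
  rw [hmul]; abel

end CentralExt

end Extension

section Phi41

variable {H : Type*} [Group H] {p v : ℕ}

structure Phi41Relations (p v : ℕ) (x : Gen → H) : Prop where
  cmt_a1_a2 : cmt (x .a1) (x .a2) = x .b
  cmt_b_a1 : cmt (x .b) (x .a1) = x .b1
  cmt_b_a2 : cmt (x .b) (x .a2) = x .b2
  cmt_a1_b1 : cmt (x .a1) (x .b1) = x .g
  cmt_a2_b2 : cmt (x .a2) (x .b2) = x .g ^ (-(v : ℤ))
  commute_a1_b2 : Commute (x .a1) (x .b2)
  commute_a2_b1 : Commute (x .a2) (x .b1)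
  commute_b_b1 : Commute (x .b) (x .b1)
  commute_b_b2 : Commute (x .b) (x .b2)
  commute_b1_b2 : Commute (x .b1) (x .b2)
  commute_g : ∀ i, Commute (x i) (x .g)
  pow_eq_one : ∀ i, x i ^ p = 1

theorem lift_rels_eq_one_iff {x : Gen → H} :
    (∀ r ∈ rels p v, FreeGroup.lift x r = 1) ↔ Phi41Relations p v x := by
  simp only [rels, Set.mem_insert_iff, Set.mem_singleton_iff, forall_eq_or_imp, forall_eq,
    c_eq_cmt, _root_.map_mul, _root_.map_inv, _root_.map_pow, _root_.map_zpow, map_cmt,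
    FreeGroup.lift_apply_of, mul_inv_eq_one, cmt_eq_one_iff]
  constructor
  · rintro ⟨h₁, h₂, h₃, h₄, h₅, h₆, h₇, h₈, h₉, h₁₀, h₁₁, h₁₂, h₁₃, h₁₄, h₁₅, h₁₆, h₁₇, h₁₈, h₁₉,
      h₂₀, h₂₁⟩
    refine ⟨h₁, h₂, h₃, h₄, h₅, h₆, h₈, h₁₀, h₁₁, h₁₃, fun i => ?_, fun i => ?_⟩
    · cases i <;> first | assumption | exact Commute.refl _
    · cases i <;> assumption
  · rintro ⟨h₁, h₂, h₃, h₄, h₅, h₆, h₈, h₁₀, h₁₁, h₁₃, hg, hp⟩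
    exact ⟨h₁, h₂, h₃, h₄, h₅, h₆, hg .a1, h₈, hg .a2, h₁₀, h₁₁, hg .b, h₁₃, hg .b1, hg .b2,
      hp .a1, hp .a2, hp .b, hp .b1, hp .b2, hp .g⟩

theorem phi41Relations_of :
    Phi41Relations p v (PresentedGroup.of : Gen → PresentedGroup (rels p v)) := by
  refine lift_rels_eq_one_iff.1 fun r hr => ?_
  rw [← FreeGroup.lift_unique (f := PresentedGroup.of) (PresentedGroup.mk _) fun _ => rfl]
  exact PresentedGroup.one_of_mem hr

def commutatorFamily (a₁ a₂ : H) : Gen → H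
  | .a1 => a₁
  | .a2 => a₂
  | .b => cmt a₁ a₂
  | .b1 => cmt (cmt a₁ a₂) a₁
  | .b2 => cmt (cmt a₁ a₂) a₂
  | .g => cmt a₁ (cmt (cmt a₁ a₂) a₁)

lemma map_commutatorFamily {H' : Type*} [Group H'] (φ : H →* H') (a₁ a₂ : H) (i : Gen) :
    φ (commutatorFamily a₁ a₂ i) = commutatorFamily (φ a₁) (φ a₂) i := by
  cases i <;> simp only [commutatorFamily, map_cmt]

lemma Phi41Relations.eq_commutatorFamily {x : Gen → H} (hx : Phi41Relations p v x) :
    x = commutatorFamily (x .a1) (x .a2) := by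
  funext i
  cases i <;> simp only [commutatorFamily, hx.cmt_a1_a2, hx.cmt_b_a1, hx.cmt_b_a2, hx.cmt_a1_b1]

end Phi41

section Lifting

variable {E G : Type*} [Group E] [Group G] {p v : ℕ}

theorem Phi41Relations.of_map {π : E →* G} (hπ : LiftsCommutingPairs π) (hp : p.Prime)
    (h3 : 3 < p) {a₁ a₂ : E} (ha₁ : a₁ ^ p = 1) (ha₂ : a₂ ^ p = 1)
    (hx : Phi41Relations p v (commutatorFamily (π a₁) (π a₂))) :
    Phi41Relations p v (commutatorFamily a₁ a₂) := by
  set X := commutatorFamily a₁ a₂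
  set x := commutatorFamily (π a₁) (π a₂)
  have hπX (i : Gen) : π (X i) = x i := map_commutatorFamily π a₁ a₂ i
  have lift {i j : Gen} (h : Commute (x i) (x j)) : Commute (X i) (X j) :=
    hπ _ _ (by rwa [hπX, hπX])
  have hg (i : Gen) : Commute (X i) (X .g) := lift (hx.commute_g i)
  have hb_pow : π (X .b ^ p) = 1 := by rw [_root_.map_pow, hπX]; exact hx.pow_eq_one .b
  have hb₁ : X .b1 ^ p = 1 := cmt_pow_eq_one_of_commute_pow (lift hx.commute_b_b1)
    (hπ.commute_of_map_eq_one hb_pow _)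
  have hb₂ : X .b2 ^ p = 1 := cmt_pow_eq_one_of_commute_pow (lift hx.commute_b_b2)
    (hπ.commute_of_map_eq_one hb_pow _)
  have hc : X .g ^ p = 1 := cmt_pow_eq_one_of_pow_eq_one (hg .b1).symm hb₁
  refine ⟨rfl, rfl, rfl, rfl, ?_, lift hx.commute_a1_b2, lift hx.commute_a2_b1,
    lift hx.commute_b_b1, lift hx.commute_b_b2, lift hx.commute_b1_b2, hg, ?_⟩
  · have hG := (commute_mul_mul_iff hx.commute_a1_b2 hx.commute_a2_b1 (hx.commute_g .b1).symm
      (hx.commute_g .a2).symm (hx.commute_g .b2).symm v).2 hx.cmt_a2_b2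
    refine (commute_mul_mul_iff (lift hx.commute_a1_b2) (lift hx.commute_a2_b1) (hg .b1).symm
      (hg .a2).symm (hg .b2).symm v).1 (hπ _ _ ?_)
    simpa only [_root_.map_mul, _root_.map_pow, hπX] using hG
  · intro i
    cases i
    exacts [ha₁, ha₂, cmt_pow_prime_eq_one hp h3 (lift hx.commute_b_b1) (hg .a1).symm
      (hg .b).symm (hg .b1).symm ha₁ hb₁ hc, hb₁, hb₂, hc]

theorem exists_splitting_of_liftsCommutingPairs {π : E →* PresentedGroup (rels p v)}
    (hπ : LiftsCommutingPairs π) (hp : p.Prime) (h3 : 3 < p) {a₁ a₂ : E}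
    (h₁ : π a₁ = PresentedGroup.of .a1) (h₂ : π a₂ = PresentedGroup.of .a2)
    (ha₁ : a₁ ^ p = 1) (ha₂ : a₂ ^ p = 1) :
    ∃ φ : PresentedGroup (rels p v) →* E, π.comp φ = MonoidHom.id _ := by
  have hfam := (phi41Relations_of (p := p) (v := v)).eq_commutatorFamily
  have hE := Phi41Relations.of_map hπ hp h3 ha₁ ha₂ <| by
    rw [h₁, h₂, ← hfam]; exact phi41Relations_of
  refine ⟨PresentedGroup.toGroup (lift_rels_eq_one_iff.2 hE), PresentedGroup.ext fun i => ?_⟩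
  rw [MonoidHom.comp_apply, PresentedGroup.toGroup.of, map_commutatorFamily, h₁, h₂, ← hfam,
    MonoidHom.id_apply]

end Lifting

theorem bogomolov_trivial_Phi41_general (p : ℕ) (hp : p.Prime) (h3 : 3 < p) (v : ℕ) :
    BogomolovMultiplierIsTrivial (PresentedGroup (rels p v)) := by
  intro f hf hbicyclic
  have : Fact (IsTwoCocycle f) := ⟨hf⟩
  have hπ := CentralExt.liftsCommutingPairs_sndHom fun g h hgh =>
    eq_swap_of_forall_isBicyclic hbicyclic hgh
  have hG := phi41Relations_of (p := p) (v := v)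
  obtain ⟨a₁, h₁, ha₁⟩ := CentralExt.exists_sndHom_eq_pow_eq_one (f := f) hp.ne_zero
    (hG.pow_eq_one .a1)
  obtain ⟨a₂, h₂, ha₂⟩ := CentralExt.exists_sndHom_eq_pow_eq_one (f := f) hp.ne_zero
    (hG.pow_eq_one .a2)
  obtain ⟨φ, hφ⟩ := exists_splitting_of_liftsCommutingPairs hπ hp h3 h₁ h₂ ha₁ ha₂
  exact CentralExt.isTwoCoboundary_of_splitting φ hφ

theorem bogomolov_trivial_Phi41 (p : ℕ) (hp : p.Prime) (h3 : 3 < p) (v : ℕ) (hv : 0 < v)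
    (hvnr : ¬ IsSquare (v : ZMod p))
    (hvmin : ∀ w : ℕ, 0 < w → w < v → IsSquare (w : ZMod p))
    (hcard : Nat.card (PresentedGroup (rels p v)) = p ^ 6) :
    BogomolovMultiplierIsTrivial (PresentedGroup (rels p v)) :=
  bogomolov_trivial_Phi41_general p hp h3 v

end Stmt14
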